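/- Let n ≥ 3 and let Y_k be a homogeneous harmonic polynomial of degree k with boundary trace 𝒴_k on S^{n-1}. For the biharmonic extension U_k(x) = Y_k(x)[1 + (k/2 + (n-4)/4)(1 - |x|^2)], the third-order boundary operator satisfies ℬ₃³(U_k) = 2(k + (n-4)/2)(k + (n-2)/2)(k + n/2) 𝒴_k on S^{n-1}, where ℬ₃³U = -∂(ΔU)/∂r - ((n-4)/2) ∂²U/∂r² - (n/2) Δ_{S^{n-1}} u + ((n-4)(n²-3n+4)/4) u with u = U|_{S^{n-1}}. -/

import Mathlib

open MeasureTheory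
open scoped Classical

variable {n : ℕ}

/-- The Euclidean Laplacian on `ℝⁿ`. -/
noncomputable def lapl (g : EuclideanSpace ℝ (Fin n) → ℝ)
    (x : EuclideanSpace ℝ (Fin n)) : ℝ :=
  ∑ i : Fin n, fderiv ℝ (fun y => fderiv ℝ g y (EuclideanSpace.single i 1)) x
    (EuclideanSpace.single i 1)

/-- The degree-zero homogeneous extension of (the boundary trace of) a function on `ℝⁿ`;
applying `lapl` to it at points of the unit sphere computes the Laplace-Beltrami operator
`Δ_{S^{n-1}}` of the restriction `u = U|_{S^{n-1}}`. -/
noncomputable def ext0 (U : EuclideanSpace ℝ (Fin n) → ℝ)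
    (y : EuclideanSpace ℝ (Fin n)) : ℝ :=
  if y = 0 then 0 else U (‖y‖⁻¹ • y)

open Filter

/-- squared norm as a sum of squares of coordinates -/
noncomputable def Nsq (y : EuclideanSpace ℝ (Fin n)) : ℝ := ∑ i, y i ^ 2

lemma Nsq_eq (y : EuclideanSpace ℝ (Fin n)) : Nsq y = ‖y‖ ^ 2 := by
  rw [EuclideanSpace.norm_eq, Real.sq_sqrt (by positivity)]
  simp [Nsq, sq_abs]

noncomputable def Nd (y : EuclideanSpace ℝ (Fin n)) : EuclideanSpace ℝ (Fin n) →L[ℝ] ℝ :=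
  ∑ i, (2 * y i) • (EuclideanSpace.proj i)

lemma hasFDerivAt_Nsq (y : EuclideanSpace ℝ (Fin n)) : HasFDerivAt Nsq (Nd y) y := by
  have h : ∀ i : Fin n, HasFDerivAt (fun z : EuclideanSpace ℝ (Fin n) => z i ^ 2)
      ((2 * y i) • (EuclideanSpace.proj i : EuclideanSpace ℝ (Fin n) →L[ℝ] ℝ)) y := by
    intro i
    have := (hasDerivAt_pow 2 (y i)).comp_hasFDerivAt y
      ((EuclideanSpace.proj i : EuclideanSpace ℝ (Fin n) →L[ℝ] ℝ).hasFDerivAt (x := y))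
    simpa [Function.comp_def] using this
  have hs := HasFDerivAt.sum (u := Finset.univ) fun i _ => h i
  rw [show (Nsq : EuclideanSpace ℝ (Fin n) → ℝ) = ∑ i, fun z : EuclideanSpace ℝ (Fin n) => z i ^ 2 from by
    funext z; simp [Nsq, Finset.sum_apply]]
  exact hs

lemma Nd_apply (y : EuclideanSpace ℝ (Fin n)) (i : Fin n) :
    Nd y (EuclideanSpace.single i 1) = 2 * y i := by
  simp [Nd, ContinuousLinearMap.sum_apply, PiLp.proj_apply,
    EuclideanSpace.single_apply]

lemma clm_apply_eq_sum (L : EuclideanSpace ℝ (Fin n) →L[ℝ] ℝ) (x : EuclideanSpace ℝ (Fin n)) :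
    L x = ∑ i, x i * L (EuclideanSpace.single i 1) := by
  have hx : x = ∑ i, x i • (EuclideanSpace.single i (1:ℝ)) := by
    have := (EuclideanSpace.basisFun (Fin n) ℝ).sum_repr x
    simp only [EuclideanSpace.basisFun_apply, EuclideanSpace.basisFun_repr] at this
    exact this.symm
  conv_lhs => rw [hx]
  rw [map_sum]
  simp [smul_eq_mul]

lemma euler {k : ℕ} {Y : EuclideanSpace ℝ (Fin n) → ℝ} (hY : ContDiff ℝ (⊤ : ℕ∞) Y)
    (hhom : ∀ (c : ℝ) x, Y (c • x) = c ^ k * Y x) (x : EuclideanSpace ℝ (Fin n)) :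
    fderiv ℝ Y x x = k * Y x := by
  have hx : HasDerivAt (fun c : ℝ => c • x) x 1 := by
    simpa using (hasDerivAt_id (1:ℝ)).smul_const x
  have hYx : HasFDerivAt Y (fderiv ℝ Y x) ((1:ℝ) • x) := by
    rw [one_smul]; exact (hY.differentiable (by simp) x).hasFDerivAt
  have h1 : HasDerivAt (fun c : ℝ => Y (c • x)) (fderiv ℝ Y x x) 1 := by
    exact hYx.comp_hasDerivAt 1 hx
  have h2 : HasDerivAt (fun c : ℝ => Y (c • x)) ((k:ℝ) * Y x) 1 := by
    have he : (fun c : ℝ => Y (c • x)) = fun c => c ^ k * Y x := funext fun c => hhom c x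
    rw [he]
    simpa using (hasDerivAt_pow k (1:ℝ)).mul_const (Y x)
  exact h1.unique h2

lemma pdY_contDiff {Y : EuclideanSpace ℝ (Fin n) → ℝ} (hY : ContDiff ℝ (⊤ : ℕ∞) Y) (i : Fin n) :
    ContDiff ℝ (⊤ : ℕ∞) (fun y => fderiv ℝ Y y (EuclideanSpace.single i 1)) :=
  (hY.fderiv_right (mod_cast le_top)).clm_apply contDiff_const

lemma lapl_congr {f g : EuclideanSpace ℝ (Fin n) → ℝ} {x : EuclideanSpace ℝ (Fin n)}
    (h : f =ᶠ[nhds x] g) : lapl f x = lapl g x := by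
  unfold lapl
  refine Finset.sum_congr rfl fun i _ => ?_
  have h1 : (fun y => fderiv ℝ f y (EuclideanSpace.single i (1:ℝ)))
      =ᶠ[nhds x] (fun y => fderiv ℝ g y (EuclideanSpace.single i 1)) := by
    filter_upwards [h.eventually_nhds] with y hy
    rw [Filter.EventuallyEq.fderiv_eq hy]
  rw [Filter.EventuallyEq.fderiv_eq h1]

lemma lapl_formula {k : ℕ} {Y : EuclideanSpace ℝ (Fin n) → ℝ} (hY : ContDiff ℝ (⊤ : ℕ∞) Y)
    (hhom : ∀ (c : ℝ) x, Y (c • x) = c ^ k * Y x) (hharm : ∀ x, lapl Y x = 0)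
    {φ φ' φ'' : ℝ → ℝ} {S : Set ℝ} (hS : IsOpen S)
    (hφ : ∀ t ∈ S, HasDerivAt φ (φ' t) t) (hφ' : ∀ t ∈ S, HasDerivAt φ' (φ'' t) t)
    {x : EuclideanSpace ℝ (Fin n)} (hx : Nsq x ∈ S) :
    lapl (fun y => Y y * φ (Nsq y)) x =
      (4 * Nsq x * φ'' (Nsq x) + 2 * n * φ' (Nsq x) + 4 * k * φ' (Nsq x)) * Y x := by
  have hYd : Differentiable ℝ Y := hY.differentiable (by simp)
  have hNc : Continuous (Nsq : EuclideanSpace ℝ (Fin n) → ℝ) := by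
    unfold Nsq; fun_prop
  have hΩ : IsOpen (Nsq ⁻¹' S : Set (EuclideanSpace ℝ (Fin n))) := hS.preimage hNc
  have hxΩ : x ∈ Nsq ⁻¹' S := hx
  have hF : ∀ y ∈ Nsq ⁻¹' S, HasFDerivAt (fun z => Y z * φ (Nsq z))
      (Y y • (φ' (Nsq y) • Nd y) + φ (Nsq y) • fderiv ℝ Y y) y := by
    intro y hy
    have h1 : HasFDerivAt (fun z => φ (Nsq z)) (φ' (Nsq y) • Nd y) y := by
      simpa [Function.comp_def] using (hφ _ hy).comp_hasFDerivAt y (hasFDerivAt_Nsq y)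
    exact (hYd y).hasFDerivAt.mul h1
  set P : Fin n → EuclideanSpace ℝ (Fin n) → ℝ := fun i y =>
    Y y * (φ' (Nsq y) * (2 * y i)) + φ (Nsq y) * fderiv ℝ Y y (EuclideanSpace.single i 1)
    with hP
  have hPval : ∀ y ∈ Nsq ⁻¹' S, ∀ i,
      fderiv ℝ (fun z => Y z * φ (Nsq z)) y (EuclideanSpace.single i 1) = P i y := by
    intro y hy i
    rw [(hF y hy).fderiv]
    simp [hP, ContinuousLinearMap.add_apply, ContinuousLinearMap.smul_apply, Nd_apply,
      smul_eq_mul]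
    try ring
  have key : ∀ i, fderiv ℝ (fun y =>
        fderiv ℝ (fun z => Y z * φ (Nsq z)) y (EuclideanSpace.single i 1)) x
        (EuclideanSpace.single i 1)
      = (4 * φ'' (Nsq x) * Y x) * (x i ^ 2)
        + (4 * φ' (Nsq x)) * (x i * fderiv ℝ Y x (EuclideanSpace.single i 1))
        + (2 * φ' (Nsq x) * Y x)
        + φ (Nsq x) * (fderiv ℝ (fun y => fderiv ℝ Y y (EuclideanSpace.single i 1)) x
            (EuclideanSpace.single i 1)) := by
    intro i
    have hev : (fun y => fderiv ℝ (fun z => Y z * φ (Nsq z)) y (EuclideanSpace.single i 1))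
        =ᶠ[nhds x] P i :=
      Filter.eventually_of_mem (hΩ.mem_nhds hxΩ) (fun y hy => hPval y hy i)
    rw [Filter.EventuallyEq.fderiv_eq hev]
    have hcoord : HasFDerivAt (fun z : EuclideanSpace ℝ (Fin n) => (2:ℝ) * z i)
        ((2:ℝ) • (EuclideanSpace.proj i : EuclideanSpace ℝ (Fin n) →L[ℝ] ℝ)) x :=
      ((EuclideanSpace.proj i : EuclideanSpace ℝ (Fin n) →L[ℝ] ℝ).hasFDerivAt).const_mul 2
    have hφ'N : HasFDerivAt (fun z => φ' (Nsq z)) (φ'' (Nsq x) • Nd x) x := by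
      simpa [Function.comp_def] using (hφ' _ hx).comp_hasFDerivAt x (hasFDerivAt_Nsq x)
    have h2 : HasFDerivAt (fun z : EuclideanSpace ℝ (Fin n) => φ' (Nsq z) * (2 * z i))
        (φ' (Nsq x) • ((2:ℝ) • (EuclideanSpace.proj i : EuclideanSpace ℝ (Fin n) →L[ℝ] ℝ))
          + (2 * x i) • (φ'' (Nsq x) • Nd x)) x := hφ'N.mul hcoord
    have h3 := (hYd x).hasFDerivAt.mul h2
    have hφN : HasFDerivAt (fun z => φ (Nsq z)) (φ' (Nsq x) • Nd x) x := by
      simpa [Function.comp_def] using (hφ _ hx).comp_hasFDerivAt x (hasFDerivAt_Nsq x)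
    have hW : HasFDerivAt (fun y => fderiv ℝ Y y (EuclideanSpace.single i 1))
        (fderiv ℝ (fun y => fderiv ℝ Y y (EuclideanSpace.single i 1)) x) x :=
      (((pdY_contDiff hY i).differentiable (by simp)) x).hasFDerivAt
    have h4 := hφN.mul hW
    have h5 := h3.add h4
    rw [hP]
    refine (congrArg (fun L => L (EuclideanSpace.single i 1)) (HasFDerivAt.fderiv h5)).trans ?_
    simp [ContinuousLinearMap.add_apply, ContinuousLinearMap.smul_apply, Nd_apply,
      smul_eq_mul, PiLp.proj_apply, EuclideanSpace.single_apply]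
    ring
  show (∑ i : Fin n, fderiv ℝ (fun y =>
      fderiv ℝ (fun z => Y z * φ (Nsq z)) y (EuclideanSpace.single i 1)) x
      (EuclideanSpace.single i 1)) = _
  rw [Finset.sum_congr rfl (fun i _ => key i)]
  rw [Finset.sum_add_distrib, Finset.sum_add_distrib, Finset.sum_add_distrib,
    ← Finset.mul_sum, ← Finset.mul_sum, ← Finset.mul_sum, ← Finset.mul_sum,
    Finset.sum_const]
  have hsum1 : (∑ i : Fin n, x i ^ 2) = Nsq x := rfl
  have hsum2 : (∑ i : Fin n, x i * fderiv ℝ Y x (EuclideanSpace.single i 1)) = (k:ℝ) * Y x := by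
    rw [← clm_apply_eq_sum, euler hY hhom x]
  have hsum3 : (∑ i : Fin n, fderiv ℝ (fun y =>
      fderiv ℝ Y y (EuclideanSpace.single i 1)) x (EuclideanSpace.single i 1)) = 0 := hharm x
  rw [hsum1, hsum2, hsum3]
  simp [Finset.card_univ]
  ring

/-- for `n ≥ 3` and `Y` a harmonic polynomial homogeneous of degree `k`, the
biharmonic extension `U_k(x) = Y(x)[1 + (k/2+(n-4)/4)(1-|x|²)]` satisfies, at every point of
the unit sphere,
`ℬ₃³(U_k) = -∂(ΔU_k)/∂r - ((n-4)/2)∂²U_k/∂r² - (n/2)Δ_{S^{n-1}}u + ((n-4)(n²-3n+4)/4)u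
 = 2(k+(n-4)/2)(k+(n-2)/2)(k+n/2) 𝒴_k`, with `u = U_k|_{S^{n-1}} = 𝒴_k`. -/
theorem stmt5 (hn : 3 ≤ n) (k : ℕ) (Y : EuclideanSpace ℝ (Fin n) → ℝ)
    (hY : ContDiff ℝ (⊤ : ℕ∞) Y)
    (hhom : ∀ (c : ℝ) (x : EuclideanSpace ℝ (Fin n)), Y (c • x) = c ^ k * Y x)
    (hharm : ∀ x, lapl Y x = 0) :
    let U : EuclideanSpace ℝ (Fin n) → ℝ := fun y =>
      Y y * (1 + ((k : ℝ) / 2 + ((n : ℝ) - 4) / 4) * (1 - ‖y‖ ^ 2))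
    ∀ x : EuclideanSpace ℝ (Fin n), ‖x‖ = 1 →
      -(deriv (fun t : ℝ => lapl U (t • x)) 1) -
          ((n : ℝ) - 4) / 2 * deriv (fun t : ℝ => deriv (fun s : ℝ => U (s • x)) t) 1 -
          (n : ℝ) / 2 * lapl (ext0 U) x +
          ((n : ℝ) - 4) * ((n : ℝ) ^ 2 - 3 * (n : ℝ) + 4) / 4 * U x =
        2 * ((k : ℝ) + ((n : ℝ) - 4) / 2) * ((k : ℝ) + ((n : ℝ) - 2) / 2) *
          ((k : ℝ) + (n : ℝ) / 2) * Y x := by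
  intro U x hx
  have hx0 : x ≠ 0 := by
    intro h; rw [h] at hx; simp at hx
  have hNx : Nsq x = 1 := by rw [Nsq_eq, hx]; norm_num
  set c : ℝ := (k:ℝ)/2 + ((n:ℝ)-4)/4 with hc
  have hUeq : U = fun y => Y y * (1 + c * (1 - Nsq y)) := by
    funext y
    show Y y * (1 + ((k : ℝ) / 2 + ((n : ℝ) - 4) / 4) * (1 - ‖y‖ ^ 2))
      = Y y * (1 + c * (1 - Nsq y))
    rw [Nsq_eq y, hc]
  rw [hUeq]
  -- Term 1
  have hdphi1 : ∀ t : ℝ, HasDerivAt (fun t : ℝ => 1 + c * (1 - t)) (-c) t := by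
    intro t
    have h1 : HasDerivAt (fun t : ℝ => 1 - t) (-1) t := by
      exact (hasDerivAt_id' t).const_sub 1
    have := (h1.const_mul c).const_add 1
    simpa using this
  have hlaplU : ∀ z, lapl (fun y => Y y * (1 + c * (1 - Nsq y))) z
      = (-(2*(n:ℝ) + 4*(k:ℝ))*c) * Y z := by
    intro z
    have h := lapl_formula (φ := fun t : ℝ => 1 + c * (1 - t)) (φ' := fun _ => -c)
      (φ'' := fun _ => 0) hY hhom hharm isOpen_univ (fun t _ => hdphi1 t)
      (fun t _ => hasDerivAt_const t (-c)) (Set.mem_univ (Nsq z))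
    rw [h]; ring
  have hT1 : deriv (fun t : ℝ => lapl (fun y => Y y * (1 + c * (1 - Nsq y))) (t • x)) 1
      = (-(2*(n:ℝ) + 4*(k:ℝ))*c) * ((k:ℝ) * Y x) := by
    have he : (fun t : ℝ => lapl (fun y => Y y * (1 + c * (1 - Nsq y))) (t • x))
        = fun t : ℝ => (-(2*(n:ℝ) + 4*(k:ℝ))*c) * (t ^ k * Y x) := by
      funext t; rw [hlaplU, hhom]
    rw [he]
    have := (((hasDerivAt_pow k (1:ℝ)).mul_const (Y x)).const_mul
      (-(2*(n:ℝ) + 4*(k:ℝ))*c)).deriv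
    simpa using this
  -- Term 2
  have hcast : ∀ m : ℕ, ((m:ℝ)) * ((m-1 : ℕ):ℝ) = (m:ℝ) * ((m:ℝ) - 1) := by
    intro m
    cases m with
    | zero => simp
    | succ p => push_cast [Nat.succ_sub_one]; ring
  have hsx : ∀ s : ℝ, Nsq (s • x) = s^2 := by
    intro s
    rw [Nsq_eq, norm_smul, hx]
    simp [Real.norm_eq_abs, sq_abs]
  have hinner : (fun s : ℝ => Y (s • x) * (1 + c * (1 - Nsq (s • x))))
      = fun s : ℝ => ((1+c) * Y x) * s^k - (c * Y x) * s^(k+2) := by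
    funext s; rw [hhom, hsx]; ring
  have hd1 : (fun t : ℝ => deriv (fun s : ℝ => Y (s • x) * (1 + c * (1 - Nsq (s • x)))) t)
      = fun t : ℝ => ((1+c) * Y x) * ((k:ℝ) * t^(k-1))
          - (c * Y x) * (((k+2 : ℕ):ℝ) * t^(k+1)) := by
    funext t
    rw [hinner]
    have ha := ((hasDerivAt_pow k t).const_mul ((1+c)*Y x)).sub
      ((hasDerivAt_pow (k+2) t).const_mul (c*Y x))
    have h21 : k + 2 - 1 = k + 1 := rfl
    refine Eq.trans ha.deriv ?_
    rw [h21]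
  have hT2 : deriv (fun t : ℝ =>
        deriv (fun s : ℝ => Y (s • x) * (1 + c * (1 - Nsq (s • x)))) t) 1
      = ((1+c) * Y x) * ((k:ℝ) * ((k:ℝ) - 1))
        - (c * Y x) * (((k:ℝ)+2) * ((k:ℝ)+1)) := by
    rw [hd1]
    have hb := (((hasDerivAt_pow (k-1) (1:ℝ)).const_mul (k:ℝ)).const_mul ((1+c)*Y x)).sub
      (((hasDerivAt_pow (k+1) (1:ℝ)).const_mul ((k+2 : ℕ):ℝ)).const_mul (c*Y x))
    refine Eq.trans hb.deriv ?_
    rw [one_pow, one_pow, mul_one, mul_one, hcast k]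
    push_cast
    ring
  -- Term 3
  set a : ℝ := -(k:ℝ)/2 with hadef
  have hev : ext0 (fun y => Y y * (1 + c * (1 - Nsq y)))
      =ᶠ[nhds x] (fun y => Y y * (Nsq y) ^ a) := by
    filter_upwards [isOpen_ne.mem_nhds hx0] with y hy
    have hny : (0:ℝ) < ‖y‖ := norm_pos_iff.mpr hy
    have h1 : ‖(‖y‖⁻¹ : ℝ) • y‖ = 1 := norm_smul_inv_norm hy
    have h2 : Nsq ((‖y‖⁻¹ : ℝ) • y) = 1 := by rw [Nsq_eq, h1]; norm_num
    have h3 : (Nsq y : ℝ) ^ a = (‖y‖⁻¹)^k := by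
      rw [Nsq_eq, hadef]
      rw [← Real.rpow_natCast ‖y‖ 2, ← Real.rpow_mul (norm_nonneg y)]
      have : ((2:ℕ):ℝ) * (-(k:ℝ)/2) = -(k:ℝ) := by push_cast; ring
      rw [this, Real.rpow_neg (norm_nonneg y), Real.rpow_natCast, inv_pow]
    show ext0 (fun y => Y y * (1 + c * (1 - Nsq y))) y = Y y * (Nsq y) ^ a
    simp only [ext0, if_neg hy]
    rw [hhom, h2, h3]
    ring
  have hT3 : lapl (ext0 (fun y => Y y * (1 + c * (1 - Nsq y)))) x
      = (4*(a*(a-1)) + 2*(n:ℝ)*a + 4*(k:ℝ)*a) * Y x := by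
    rw [lapl_congr hev]
    have h := lapl_formula (φ := fun t : ℝ => t ^ a) (φ' := fun t : ℝ => a * t^(a-1))
      (φ'' := fun t : ℝ => a * ((a-1) * t^(a-1-1))) hY hhom hharm isOpen_Ioi
      (fun t ht => by
        simpa using Real.hasDerivAt_rpow_const (Or.inl (ne_of_gt (Set.mem_Ioi.mp ht))))
      (fun t ht => by
        exact (Real.hasDerivAt_rpow_const
          (Or.inl (ne_of_gt (Set.mem_Ioi.mp ht)))).const_mul a)
      (show Nsq x ∈ Set.Ioi (0:ℝ) by rw [hNx]; norm_num)
    rw [h, hNx]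
    simp [Real.one_rpow]
    try ring
  rw [hT1, hT2, hT3]
  have hFx : (fun y => Y y * (1 + c * (1 - Nsq y))) x = Y x := by simp [hNx]
  rw [hFx, hc, hadef]
  ring
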